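/- Let B be an inner function with η-weak Property 𝔥 for some η ∈ (0,1). Then each connected component of the level set Ω_{B,η} = {z ∈ 𝔻 : |B(z)| < η} contains at least one zero of B, and the number of zeros of B (counted with multiplicity) in each connected component of Ω_{B,η} is at most (ln η)/(ln δ_{B,η}). -/

import Mathlib

/-!
Let `C` be a component of `Ω = {|B| < η}`. Since its closure lies in the disc, `C` is a bounded
open set on whose frontier `|B| = η`; the minimum modulus principle then puts a zero of `B` in `C`,
and the identity theorem makes the zeros in the compact set `closure C` finite. Dividing `B` by
the Blaschke factors of these zeros, with multiplicity, keeps it bounded by `1` (Schwarz's lemma).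
At a frontier point `ζ` of `C` this gives `η = |B ζ| ≤ ∏ ρ(w, ζ) ^ m_w ≤ δ ^ N`, where
`ρ(w, ζ) ≤ δ` because `ζ` is a limit of points of `C`; taking logarithms gives `N ≤ log η / log δ`.
-/

noncomputable section

/-- The level set Ω_{f,θ} = {z ∈ 𝔻 : |f(z)| < θ}. -/
def levelSet (f : ℂ → ℂ) (θ : ℝ) : Set ℂ :=
  {z : ℂ | ‖z‖ < 1 ∧ ‖f z‖ < θ}

/-- An inner function: holomorphic and bounded by 1 on 𝔻, with radial limits of modulus 1 a.e. -/
def IsInner (u : ℂ → ℂ) : Prop :=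
  DifferentiableOn ℂ u (Metric.ball (0:ℂ) 1) ∧
  (∀ z ∈ Metric.ball (0:ℂ) 1, ‖u z‖ ≤ 1) ∧
  (∀ᵐ θ : ℝ ∂MeasureTheory.volume,
    Filter.Tendsto
      (fun r : ℝ => ‖u ((r : ℂ) * Complex.exp ((θ : ℂ) * Complex.I))‖)
      (nhdsWithin 1 (Set.Iio 1)) (nhds 1))

/-- The pseudo-hyperbolic distance on 𝔻. -/
def pseudoDist (z w : ℂ) : ℝ :=
  ‖z - w‖ / ‖1 - (starRingEnd ℂ) z * w‖

/-- δ_{u,η} : sup of pseudo-hyperbolic distances of pairs lying in a common component of Ω_{u,η}. -/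
def deltaLevel (u : ℂ → ℂ) (η : ℝ) : ℝ :=
  sSup {d : ℝ | ∃ z₁ z₂ : ℂ, z₁ ∈ levelSet u η ∧
    z₂ ∈ connectedComponentIn (levelSet u η) z₁ ∧ d = pseudoDist z₁ z₂}

/-- Property 𝔅. -/
def PropertyB (u : ℂ → ℂ) : Prop :=
  ∀ θ ∈ Set.Ioo (0:ℝ) 1, ∀ z ∈ levelSet u θ,
    closure (connectedComponentIn (levelSet u θ) z) ⊆ Metric.ball (0:ℂ) 1

/-- θ-weak Property 𝔅. -/
def WeakPropertyBAt (u : ℂ → ℂ) (θ : ℝ) : Prop :=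
  θ ∈ Set.Ioo (0:ℝ) 1 ∧ ∀ z ∈ levelSet u θ,
    closure (connectedComponentIn (levelSet u θ) z) ⊆ Metric.ball (0:ℂ) 1

/-- η-weak Property 𝔥. -/
def WeakPropertyHAt (u : ℂ → ℂ) (η : ℝ) : Prop :=
  WeakPropertyBAt u η ∧ deltaLevel u η < 1

/-- Supremum norm over the unit disk. -/
def supNormD (f : ℂ → ℂ) : ℝ :=
  ⨆ z : (Metric.ball (0:ℂ) 1), ‖f (z : ℂ)‖

/-- A Blaschke product. -/
def IsBlaschkeProduct (B : ℂ → ℂ) : Prop :=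
  ∃ (ι : Type) (_ : Countable ι) (m : ℕ) (lam : ℂ) (α : ι → ℂ),
    ‖lam‖ = 1 ∧
    (∀ n, ‖α n‖ < 1 ∧ α n ≠ 0) ∧
    (Summable fun n => 1 - ‖α n‖) ∧
    ∀ z ∈ Metric.ball (0:ℂ) 1,
      B z = lam * z ^ m *
        ∏' n, ((‖α n‖ : ℂ) / α n) * ((α n - z) / (1 - (starRingEnd ℂ) (α n) * z))

/-- Order of vanishing (multiplicity of zero) via iterated derivatives. -/
def zeroOrder (f : ℂ → ℂ) (z : ℂ) : ℕ :=
  sInf {n : ℕ | iteratedDeriv n f z ≠ 0}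

open Metric Set Filter Topology ComplexConjugate

section Blaschke

def blaschkeFactor (a z : ℂ) : ℂ :=
  (a - z) / (1 - conj a * z)

variable {a z : ℂ}

lemma one_sub_conj_mul_ne_zero (ha : ‖a‖ < 1) (hz : ‖z‖ ≤ 1) : 1 - conj a * z ≠ 0 := by
  refine sub_ne_zero.2 fun h => ?_
  have : ‖conj a * z‖ < 1 := by
    rw [norm_mul, Complex.norm_conj]
    nlinarith [norm_nonneg a, norm_nonneg z]
  simp [← h] at this

lemma normSq_one_sub_conj_mul_sub_normSq_sub (a z : ℂ) :
    Complex.normSq (1 - conj a * z) - Complex.normSq (a - z) =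
      (1 - Complex.normSq a) * (1 - Complex.normSq z) := by
  simp only [Complex.normSq_apply, Complex.sub_re, Complex.sub_im, Complex.mul_re,
    Complex.mul_im, Complex.conj_re, Complex.conj_im, Complex.one_re, Complex.one_im]
  ring

lemma pseudoDist_nonneg (a z : ℂ) : 0 ≤ pseudoDist a z :=
  div_nonneg (norm_nonneg _) (norm_nonneg _)

lemma norm_blaschkeFactor (a z : ℂ) : ‖blaschkeFactor a z‖ = pseudoDist a z :=
  norm_div _ _

lemma norm_blaschkeFactor_lt_one (ha : ‖a‖ < 1) (hz : ‖z‖ < 1) : ‖blaschkeFactor a z‖ < 1 := by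
  have hden := one_sub_conj_mul_ne_zero ha hz.le
  rw [blaschkeFactor, norm_div, div_lt_one (norm_pos_iff.2 hden), ← sq_lt_sq₀ (norm_nonneg _)
    (norm_nonneg _), Complex.sq_norm, Complex.sq_norm, ← sub_pos,
    normSq_one_sub_conj_mul_sub_normSq_sub]
  have ha' : Complex.normSq a < 1 := by rw [← Complex.sq_norm]; nlinarith [norm_nonneg a]
  have hz' : Complex.normSq z < 1 := by rw [← Complex.sq_norm]; nlinarith [norm_nonneg z]
  nlinarith

lemma blaschkeFactor_self (a : ℂ) : blaschkeFactor a a = 0 := by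
  simp [blaschkeFactor]

lemma blaschkeFactor_ne_zero (ha : ‖a‖ < 1) (hz : ‖z‖ < 1) (hza : z ≠ a) :
    blaschkeFactor a z ≠ 0 :=
  div_ne_zero (sub_ne_zero.2 hza.symm) (one_sub_conj_mul_ne_zero ha hz.le)

lemma blaschkeFactor_blaschkeFactor (ha : ‖a‖ < 1) (hz : ‖z‖ < 1) :
    blaschkeFactor a (blaschkeFactor a z) = z := by
  have hden := one_sub_conj_mul_ne_zero ha hz.le
  have ha' : 1 - conj a * a ≠ 0 := one_sub_conj_mul_ne_zero ha ha.le
  have hnum : a - blaschkeFactor a z = z * (1 - conj a * a) / (1 - conj a * z) := by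
    rw [blaschkeFactor, eq_div_iff hden, sub_mul, div_mul_cancel₀ _ hden]
    ring
  have hden' : 1 - conj a * blaschkeFactor a z = (1 - conj a * a) / (1 - conj a * z) := by
    rw [blaschkeFactor, eq_div_iff hden, sub_mul, mul_div_assoc', div_mul_cancel₀ _ hden]
    ring
  rw [blaschkeFactor, hnum, hden', div_div_div_cancel_right₀ hden, mul_div_cancel_right₀ _ ha']

lemma sub_eq_blaschkeFactor_mul (ha : ‖a‖ < 1) (hz : ‖z‖ < 1) :
    z - a = blaschkeFactor a z * (conj a * z - 1) := by
  rw [blaschkeFactor, div_mul_eq_mul_div, eq_div_iff (one_sub_conj_mul_ne_zero ha hz.le)]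
  ring

lemma differentiableOn_blaschkeFactor (ha : ‖a‖ < 1) :
    DifferentiableOn ℂ (blaschkeFactor a) (ball 0 1) := fun _ hw =>
  ((differentiableAt_const a).sub differentiableAt_id |>.div
    ((differentiableAt_const 1).sub ((differentiableAt_const _).mul differentiableAt_id))
    (one_sub_conj_mul_ne_zero ha (mem_ball_zero_iff.1 hw).le)).differentiableWithinAt

end Blaschke

section DivisionByBlaschkeFactors

variable {g g₁ : ℂ → ℂ} {a : ℂ}

/-- Schwarz's lemma applied to `g ∘ blaschkeFactor a`, which vanishes at `0`. -/
theorem mapsTo_closedBall_of_eq_blaschkeFactor_mul (ha : ‖a‖ < 1)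
    (hg : MapsTo g (ball 0 1) (closedBall 0 1)) (hg₁ : DifferentiableOn ℂ g₁ (ball 0 1))
    (hgg₁ : ∀ z ∈ ball 0 1, g z = blaschkeFactor a z * g₁ z) :
    MapsTo g₁ (ball 0 1) (closedBall 0 1) := by
  have hφ : MapsTo (blaschkeFactor a) (ball 0 1) (ball 0 1) := fun z hz =>
    mem_ball_zero_iff.2 (norm_blaschkeFactor_lt_one ha (mem_ball_zero_iff.1 hz))
  set G := g ∘ blaschkeFactor a
  have hG0 : G 0 = 0 := by
    simp [G, blaschkeFactor, hgg₁ a (mem_ball_zero_iff.2 ha)]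
  have hGd : DifferentiableOn ℂ G (ball 0 1) :=
    ((differentiableOn_blaschkeFactor ha).mul hg₁).congr (fun z hz => hgg₁ z hz)
      |>.comp (differentiableOn_blaschkeFactor ha) hφ
  have hGmaps : MapsTo G (ball 0 1) (closedBall (G 0) 1) := by
    rw [hG0]
    exact hg.comp hφ
  have hoff : ∀ z ∈ ball (0 : ℂ) 1, z ≠ a → ‖g₁ z‖ ≤ 1 := by
    intro z hz hza
    have hz' := mem_ball_zero_iff.1 hz
    have hu := blaschkeFactor_ne_zero ha hz' hza
    have hslope : dslope G 0 (blaschkeFactor a z) = g₁ z := by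
      rw [dslope_of_ne _ hu, slope_def_field, hG0, sub_zero, sub_zero]
      simp only [G, Function.comp_apply]
      rw [blaschkeFactor_blaschkeFactor ha hz', hgg₁ z hz, mul_div_cancel_left₀ _ hu]
    simpa [hslope] using Complex.norm_dslope_le_div_of_mapsTo_ball hGd hGmaps (hφ hz)
  intro z hz
  rw [mem_closedBall_zero_iff]
  rcases ne_or_eq z a with hza | rfl
  · exact hoff z hz hza
  · have hcont := (hg₁.continuousOn.continuousAt (isOpen_ball.mem_nhds hz)).norm
    refine le_of_tendsto (hcont.tendsto.mono_left (nhdsWithin_le_nhds (s := {z}ᶜ))) ?_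
    filter_upwards [nhdsWithin_le_nhds (isOpen_ball.mem_nhds hz), self_mem_nhdsWithin]
      with w hw hwz using hoff w hw hwz

theorem mapsTo_closedBall_of_eq_blaschkeFactor_pow_mul (ha : ‖a‖ < 1) (n : ℕ)
    (hg : MapsTo g (ball 0 1) (closedBall 0 1)) (hg₁ : DifferentiableOn ℂ g₁ (ball 0 1))
    (hgg₁ : ∀ z ∈ ball 0 1, g z = blaschkeFactor a z ^ n * g₁ z) :
    MapsTo g₁ (ball 0 1) (closedBall 0 1) := by
  induction n generalizing g with
  | zero => simpa using hg.congr fun z hz => (hgg₁ z hz).trans (one_mul _)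
  | succ n ih =>
    refine ih (g := fun z => blaschkeFactor a z ^ n * g₁ z)
      (mapsTo_closedBall_of_eq_blaschkeFactor_mul ha hg
        (((differentiableOn_blaschkeFactor ha).pow n).mul hg₁) fun z hz => ?_) fun _ _ => rfl
    rw [hgg₁ z hz, pow_succ]
    ring

theorem norm_le_prod_pseudoDist_pow {h : ℂ → ℂ} {S : Finset ℂ} {m : ℂ → ℕ}
    (hS : ∀ w ∈ S, ‖w‖ < 1) (hg : MapsTo g (ball 0 1) (closedBall 0 1))
    (hh : DifferentiableOn ℂ h (ball 0 1))
    (hgh : ∀ z ∈ ball 0 1, g z = (∏ w ∈ S, (z - w) ^ m w) * h z) {ζ : ℂ} (hζ : ζ ∈ ball 0 1) :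
    ‖g ζ‖ ≤ ∏ w ∈ S, pseudoDist w ζ ^ m w := by
  classical
  induction S using Finset.induction_on generalizing g h with
  | empty => simpa using mem_closedBall_zero_iff.1 (hg hζ)
  | insert a S haS ih =>
    have ha := hS a (Finset.mem_insert_self a S)
    set h₁ := fun z => (conj a * z - 1) ^ m a * h z
    have hh₁ : DifferentiableOn ℂ h₁ (ball 0 1) :=
      ((((differentiable_const _).mul differentiable_id).sub_const 1).pow _).differentiableOn.mul hh
    set g₁ := fun z => (∏ w ∈ S, (z - w) ^ m w) * h₁ z
    have hgg₁ : ∀ z ∈ ball 0 1, g z = blaschkeFactor a z ^ m a * g₁ z := fun z hz => by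
      rw [hgh z hz, Finset.prod_insert haS, sub_eq_blaschkeFactor_mul ha (mem_ball_zero_iff.1 hz),
        mul_pow]
      simp only [g₁, h₁]
      ring
    have hg₁ : MapsTo g₁ (ball 0 1) (closedBall 0 1) :=
      mapsTo_closedBall_of_eq_blaschkeFactor_pow_mul ha (m a) hg
        ((by fun_prop : Differentiable ℂ fun z => ∏ w ∈ S, (z - w) ^ m w).differentiableOn.mul
          hh₁) hgg₁
    rw [hgg₁ ζ hζ, norm_mul, norm_pow, norm_blaschkeFactor, Finset.prod_insert haS]
    exact mul_le_mul_of_nonneg_left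
      (ih (fun w hw => hS w (Finset.mem_insert_of_mem hw)) hg₁ hh₁ fun _ _ => rfl)
      (pow_nonneg (pseudoDist_nonneg a ζ) _)

end DivisionByBlaschkeFactors

section Factorization

variable {𝕜 : Type*} [NontriviallyNormedField 𝕜] {f g : 𝕜 → 𝕜} {U : Set 𝕜}

theorem DifferentiableOn.exists_eq_pow_mul (hU : IsOpen U) (hf : DifferentiableOn 𝕜 f U)
    {w : 𝕜} (hw : w ∈ U) {n : ℕ} (hg : DifferentiableAt 𝕜 g w)
    (hfg : ∀ᶠ z in 𝓝 w, f z = (z - w) ^ n * g z) :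
    ∃ h : 𝕜 → 𝕜, DifferentiableOn 𝕜 h U ∧ ∀ z ∈ U, f z = (z - w) ^ n * h z := by
  classical
  set h := Function.update (fun z => f z / (z - w) ^ n) w (g w)
  have hpow : ∀ z ≠ w, (z - w) ^ n ≠ 0 := fun z hz => pow_ne_zero n (sub_ne_zero.2 hz)
  have hhg : h =ᶠ[𝓝 w] g := by
    filter_upwards [hfg] with z hz
    rcases eq_or_ne z w with rfl | hzw
    · simp [h]
    · rw [show h z = _ from Function.update_of_ne hzw _ _, hz, mul_div_cancel_left₀ _ (hpow z hzw)]
  refine ⟨h, fun z hz => ?_, fun z hz => ?_⟩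
  · rcases eq_or_ne z w with rfl | hzw
    · exact (hg.congr_of_eventuallyEq hhg).differentiableWithinAt
    · have hquot : DifferentiableAt 𝕜 (fun z => f z / (z - w) ^ n) z :=
        ((hf.differentiableAt (hU.mem_nhds hz)).div
          ((differentiableAt_id.sub_const w).pow n) (hpow z hzw))
      refine (hquot.congr_of_eventuallyEq ?_).differentiableWithinAt
      filter_upwards [isOpen_ne.mem_nhds hzw] with y hy
      exact Function.update_of_ne hy _ _
  · rcases eq_or_ne z w with rfl | hzw
    · rcases Nat.eq_zero_or_pos n with rfl | hn
      · simpa [h] using hfg.self_of_nhds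
      · simpa [zero_pow hn.ne'] using hfg.self_of_nhds
    · rw [show h z = _ from Function.update_of_ne hzw _ _, mul_div_cancel₀ _ (hpow z hzw)]

theorem DifferentiableOn.exists_eq_prod_pow_mul (hU : IsOpen U) (hf : DifferentiableOn 𝕜 f U)
    (m : 𝕜 → ℕ) (S : Finset 𝕜) (hS : ∀ w ∈ S, w ∈ U)
    (hloc : ∀ w ∈ S, ∃ g : 𝕜 → 𝕜, DifferentiableAt 𝕜 g w ∧
      ∀ᶠ z in 𝓝 w, f z = (z - w) ^ m w * g z) :
    ∃ h : 𝕜 → 𝕜, DifferentiableOn 𝕜 h U ∧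
      ∀ z ∈ U, f z = (∏ w ∈ S, (z - w) ^ m w) * h z := by
  classical
  induction S using Finset.induction_on with
  | empty => exact ⟨f, hf, fun z _ => by simp⟩
  | insert a S haS ih =>
    obtain ⟨h₁, hh₁, hfh₁⟩ := ih (fun w hw => hS w (Finset.mem_insert_of_mem hw))
      (fun w hw => hloc w (Finset.mem_insert_of_mem hw))
    obtain ⟨g, hg, hfg⟩ := hloc a (Finset.mem_insert_self a S)
    have haU := hS a (Finset.mem_insert_self a S)
    set P := fun z => ∏ w ∈ S, (z - w) ^ m w
    have hPa : P a ≠ 0 := Finset.prod_ne_zero_iff.2 fun w hw =>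
      pow_ne_zero _ (sub_ne_zero.2 fun h => haS (h ▸ hw))
    have hP : Differentiable 𝕜 P := by fun_prop
    have hh₁a : ∀ᶠ z in 𝓝 a, h₁ z = (z - a) ^ m a * (g z / P z) := by
      filter_upwards [(hP a).continuousAt.eventually_ne hPa, hU.mem_nhds haU, hfg]
        with z hPz hzU hfz
      rw [hfh₁ z hzU] at hfz
      field_simp
      linear_combination hfz
    obtain ⟨h, hh, hh₁h⟩ := hh₁.exists_eq_pow_mul hU haU (hg.div (hP a) hPa) hh₁a
    refine ⟨h, hh, fun z hz => ?_⟩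
    rw [Finset.prod_insert haS, hfh₁ z hz, hh₁h z hz]
    ring

end Factorization

section ZeroOrder

variable {f : ℂ → ℂ} {U : Set ℂ}

theorem AnalyticAt.zeroOrder_eq_analyticOrderNatAt {w : ℂ} (hf : AnalyticAt ℂ f w)
    (hfin : analyticOrderAt f w ≠ ⊤) : zeroOrder f w = analyticOrderNatAt f w := by
  obtain ⟨hvanish, hne⟩ :=
    (analyticOrderAt_eq_nat_iff_iteratedDeriv_eq_zero hf).1 (Nat.cast_analyticOrderNatAt hfin).symm
  exact le_antisymm (Nat.sInf_le hne)
    (le_csInf ⟨_, hne⟩ fun k hk => not_lt.1 fun hlt => hk (hvanish k hlt))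

theorem AnalyticOnNhd.exists_eq_prod_pow_zeroOrder_mul (hU : IsOpen U) (hUc : IsPreconnected U)
    (hf : AnalyticOnNhd ℂ f U) {x₀ : ℂ} (hx₀ : x₀ ∈ U) (hfx₀ : f x₀ ≠ 0) (S : Finset ℂ)
    (hS : ∀ w ∈ S, w ∈ U) :
    ∃ h : ℂ → ℂ, DifferentiableOn ℂ h U ∧
      ∀ z ∈ U, f z = (∏ w ∈ S, (z - w) ^ zeroOrder f w) * h z := by
  refine hf.differentiableOn.exists_eq_prod_pow_mul hU _ S hS fun w hw => ?_
  have hfin : analyticOrderAt f w ≠ ⊤ := analyticOrderAt_ne_top_of_isPreconnected hf hUc hx₀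
    (hS w hw) (by simp [analyticOrderAt_eq_zero.2 (Or.inr hfx₀)])
  obtain ⟨g, hg, -, hfg⟩ := (hf w (hS w hw)).analyticOrderAt_eq_natCast.1
    ((hf w (hS w hw)).zeroOrder_eq_analyticOrderNatAt hfin ▸ Nat.cast_analyticOrderNatAt hfin).symm
  exact ⟨g, hg.differentiableAt, by simpa only [smul_eq_mul] using hfg⟩

end ZeroOrder

theorem IsOpen.mem_connectedComponentIn_of_mem_closure {X : Type*} [TopologicalSpace X]
    [LocallyConnectedSpace X] {F : Set X} {x y : X} (hF : IsOpen F) (hyF : y ∈ F)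
    (hy : y ∈ closure (connectedComponentIn F x)) : y ∈ connectedComponentIn F x := by
  obtain ⟨w, hwy, hwx⟩ :=
    mem_closure_iff.1 hy _ hF.connectedComponentIn (mem_connectedComponentIn hyF)
  rw [connectedComponentIn_eq hwx, ← connectedComponentIn_eq hwy]
  exact mem_connectedComponentIn hyF

theorem Complex.exists_mem_eq_zero_of_norm_lt_of_forall_mem_frontier {f : ℂ → ℂ} {U : Set ℂ}
    {θ : ℝ} (hU : Bornology.IsBounded U) (hf : DiffContOnCl ℂ f U)
    (hfr : ∀ ζ ∈ frontier U, θ ≤ ‖f ζ‖) {z : ℂ} (hz : z ∈ U) (hlt : ‖f z‖ < θ) :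
    ∃ w ∈ U, f w = 0 := by
  by_contra! hU0
  have hθ : 0 < θ := (norm_nonneg _).trans_lt hlt
  have hcl0 : ∀ w ∈ closure U, f w ≠ 0 := by
    rw [closure_eq_self_union_frontier]
    rintro w (hw | hw)
    · exact hU0 w hw
    · exact norm_pos_iff.1 (hθ.trans_le (hfr w hw))
  have hinv := Complex.norm_le_of_forall_mem_frontier_norm_le hU (hf.inv hcl0)
    (C := θ⁻¹) (fun ζ hζ => by simpa only [Pi.inv_apply, norm_inv] using inv_anti₀ hθ (hfr ζ hζ))
    (subset_closure hz)
  rw [Pi.inv_apply, norm_inv, inv_le_inv₀ (norm_pos_iff.2 (hU0 z hz)) hθ] at hinv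
  exact hlt.not_ge hinv

theorem AnalyticOnNhd.finite_setOf_eq_zero_of_isCompact {f : ℂ → ℂ} {U K : Set ℂ}
    (hf : AnalyticOnNhd ℂ f U) (hU : IsConnected U) {x₀ : ℂ} (hx₀ : x₀ ∈ U) (hfx₀ : f x₀ ≠ 0)
    (hK : IsCompact K) (hKU : K ⊆ U) : {w ∈ K | f w = 0}.Finite :=
  (hK.finite_sdiff_of_mem_codiscreteWithin (codiscreteWithin_mono hKU
    (hf.preimage_zero_mem_codiscreteWithin hfx₀ hx₀ hU))).subset
    fun _ hw => ⟨hw.1, by simpa using hw.2⟩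

section LevelSets

variable {f : ℂ → ℂ} {θ : ℝ} {z : ℂ}

theorem isOpen_levelSet (hf : ContinuousOn f (ball 0 1)) (θ : ℝ) : IsOpen (levelSet f θ) := by
  have : levelSet f θ = ball 0 1 ∩ f ⁻¹' {w | ‖w‖ < θ} := by
    ext; simp [levelSet]
  rw [this]
  exact hf.isOpen_inter_preimage isOpen_ball (isOpen_lt continuous_norm continuous_const)

theorem norm_eq_of_mem_frontier_connectedComponentIn_levelSet (hf : ContinuousOn f (ball 0 1))
    (hcl : closure (connectedComponentIn (levelSet f θ) z) ⊆ ball 0 1) {ζ : ℂ}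
    (hζ : ζ ∈ frontier (connectedComponentIn (levelSet f θ) z)) : ‖f ζ‖ = θ := by
  have hF := isOpen_levelSet hf θ
  have hζcl := frontier_subset_closure hζ
  have hζB := hcl hζcl
  refine le_antisymm ?_ (not_lt.1 fun hlt => ?_)
  · refine ContinuousWithinAt.closure_le hζcl
      (hf.continuousAt (isOpen_ball.mem_nhds hζB)).norm.continuousWithinAt
      continuousWithinAt_const fun x hx => (connectedComponentIn_subset _ _ hx).2.le
  · rw [hF.connectedComponentIn.frontier_eq] at hζ
    exact hζ.2 (hF.mem_connectedComponentIn_of_mem_closure ⟨mem_ball_zero_iff.1 hζB, hlt⟩ hζcl)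

theorem exists_zero_mem_connectedComponentIn_levelSet (hf : DifferentiableOn ℂ f (ball 0 1))
    (hcl : closure (connectedComponentIn (levelSet f θ) z) ⊆ ball 0 1) (hz : z ∈ levelSet f θ) :
    ∃ w ∈ connectedComponentIn (levelSet f θ) z, f w = 0 :=
  Complex.exists_mem_eq_zero_of_norm_lt_of_forall_mem_frontier
    (isBounded_ball.subset (subset_closure.trans hcl))
    ⟨hf.mono (subset_closure.trans hcl), hf.continuousOn.mono hcl⟩
    (fun _ hζ => (norm_eq_of_mem_frontier_connectedComponentIn_levelSet hf.continuousOn hcl hζ).ge)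
    (mem_connectedComponentIn hz) hz.2

theorem pseudoDist_le_deltaLevel {x y : ℂ} (hx : x ∈ levelSet f θ)
    (hy : y ∈ connectedComponentIn (levelSet f θ) x) : pseudoDist x y ≤ deltaLevel f θ := by
  refine le_csSup ⟨1, ?_⟩ ⟨x, y, hx, hy, rfl⟩
  rintro d ⟨z₁, z₂, hz₁, hz₂, rfl⟩
  rw [← norm_blaschkeFactor]
  exact (norm_blaschkeFactor_lt_one hz₁.1 (connectedComponentIn_subset _ _ hz₂).1).le

theorem deltaLevel_nonneg (hz : z ∈ levelSet f θ) : 0 ≤ deltaLevel f θ := by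
  simpa [pseudoDist] using pseudoDist_le_deltaLevel hz (mem_connectedComponentIn hz)

theorem pseudoDist_le_deltaLevel_of_mem_closure {w ζ : ℂ}
    (hw : w ∈ connectedComponentIn (levelSet f θ) z)
    (hζ : ζ ∈ closure (connectedComponentIn (levelSet f θ) z)) :
    pseudoDist w ζ ≤ deltaLevel f θ := by
  have hwF := connectedComponentIn_subset _ _ hw
  have hζ1 : ‖ζ‖ ≤ 1 := mem_closedBall_zero_iff.1 <| closure_ball (0 : ℂ) one_ne_zero ▸
    closure_mono (fun x hx => mem_ball_zero_iff.2 (connectedComponentIn_subset _ _ hx).1) hζ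
  have hcont : ContinuousAt (pseudoDist w) ζ :=
    (continuous_const.sub continuous_id).norm.continuousAt.div
      (continuous_const.sub (continuous_const.mul continuous_id)).norm.continuousAt
      (norm_ne_zero_iff.2 (one_sub_conj_mul_ne_zero hwF.1 hζ1))
  refine ContinuousWithinAt.closure_le hζ hcont.continuousWithinAt continuousWithinAt_const
    fun x hx => pseudoDist_le_deltaLevel hwF ?_
  rwa [← connectedComponentIn_eq hw]

theorem norm_le_deltaLevel_pow_sum_zeroOrder (hf : DifferentiableOn ℂ f (ball 0 1))
    (hf1 : MapsTo f (ball 0 1) (closedBall 0 1))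
    (hcl : closure (connectedComponentIn (levelSet f θ) z) ⊆ ball 0 1) {S : Finset ℂ}
    (hS : ∀ w ∈ S, w ∈ connectedComponentIn (levelSet f θ) z) {ζ : ℂ}
    (hζ : ζ ∈ closure (connectedComponentIn (levelSet f θ) z)) (hfζ : f ζ ≠ 0) :
    ‖f ζ‖ ≤ deltaLevel f θ ^ ∑ w ∈ S, zeroOrder f w := by
  have hSB : ∀ w ∈ S, w ∈ ball (0 : ℂ) 1 := fun w hw => hcl (subset_closure (hS w hw))
  obtain ⟨h, hh, hfh⟩ := (hf.analyticOnNhd isOpen_ball).exists_eq_prod_pow_zeroOrder_mul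
    isOpen_ball (convex_ball 0 1).isPreconnected (hcl hζ) hfζ S hSB
  calc ‖f ζ‖ ≤ ∏ w ∈ S, pseudoDist w ζ ^ zeroOrder f w :=
        norm_le_prod_pseudoDist_pow (fun w hw => mem_ball_zero_iff.1 (hSB w hw)) hf1 hh hfh
          (hcl hζ)
    _ ≤ ∏ w ∈ S, deltaLevel f θ ^ zeroOrder f w :=
        Finset.prod_le_prod (fun w _ => pow_nonneg (pseudoDist_nonneg w ζ) _) fun w hw =>
          pow_le_pow_left₀ (pseudoDist_nonneg w ζ)
            (pseudoDist_le_deltaLevel_of_mem_closure (hS w hw) hζ) _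
    _ = deltaLevel f θ ^ ∑ w ∈ S, zeroOrder f w := Finset.prod_pow_eq_pow_sum _ _ _

end LevelSets

theorem natCast_le_log_div_log_of_le_pow {η δ : ℝ} {N : ℕ} (hη : 0 < η) (hδ0 : 0 ≤ δ)
    (hδ1 : δ < 1) (h : η ≤ δ ^ N) : (N : ℝ) ≤ Real.log η / Real.log δ := by
  rcases hδ0.eq_or_lt with rfl | hδ
  -- for `δ = 0` the bound forces `N = 0`, and the right side is `0` since `Real.log 0 = 0`
  · obtain rfl : N = 0 := by
      by_contra hN
      exact hη.not_ge (h.trans_eq (zero_pow hN))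
    simp
  · rw [le_div_iff_of_neg (Real.log_neg hδ hδ1), ← Real.log_pow]
    exact Real.log_le_log hη h

/-- For an inner function with η-weak Property 𝔥, each component of Ω_{B,η} contains at least
one zero, and the number of zeros counted with multiplicity is at most ln η / ln δ_{B,η}. -/
theorem stmt8 (B : ℂ → ℂ) (hB : IsInner B)
    (η : ℝ) (hWH : WeakPropertyHAt B η) :
    ∀ z ∈ levelSet B η,
      (∃ w ∈ connectedComponentIn (levelSet B η) z, B w = 0) ∧
      ∃ S : Finset ℂ,
        (↑S = {w ∈ connectedComponentIn (levelSet B η) z | B w = 0}) ∧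
        ((∑ w ∈ S, zeroOrder B w : ℕ) : ℝ) ≤ Real.log η / Real.log (deltaLevel B η) := by
  obtain ⟨hdiff, hbound, -⟩ := hB
  obtain ⟨⟨⟨hη, -⟩, hcl⟩, hδ⟩ := hWH
  intro z hz
  set C := connectedComponentIn (levelSet B η) z
  have hCB : C ⊆ ball 0 1 := subset_closure.trans (hcl z hz)
  obtain ⟨ζ, hζ⟩ : (frontier C).Nonempty := nonempty_frontier_iff.2
    ⟨⟨z, mem_connectedComponentIn hz⟩,
      (ne_univ_iff_exists_notMem C).2 ⟨1, fun h1 => by simpa using hCB h1⟩⟩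
  have hζB : ζ ∈ ball (0 : ℂ) 1 := hcl z hz (frontier_subset_closure hζ)
  have hBζ : ‖B ζ‖ = η :=
    norm_eq_of_mem_frontier_connectedComponentIn_levelSet hdiff.continuousOn (hcl z hz) hζ
  have hBζ0 : B ζ ≠ 0 := norm_pos_iff.1 (hBζ ▸ hη)
  have hfin : {w ∈ C | B w = 0}.Finite :=
    ((hdiff.analyticOnNhd isOpen_ball).finite_setOf_eq_zero_of_isCompact
      (isConnected_ball one_pos) hζB hBζ0 (isBounded_ball.subset hCB).isCompact_closure
      (hcl z hz)).subset fun w hw => ⟨subset_closure hw.1, hw.2⟩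
  refine ⟨exists_zero_mem_connectedComponentIn_levelSet hdiff (hcl z hz) hz, hfin.toFinset,
    hfin.coe_toFinset, natCast_le_log_div_log_of_le_pow hη (deltaLevel_nonneg hz) hδ ?_⟩
  exact hBζ ▸ norm_le_deltaLevel_pow_sum_zeroOrder hdiff
    (fun x hx => mem_closedBall_zero_iff.2 (hbound x hx)) (hcl z hz)
    (fun w hw => (hfin.mem_toFinset.1 hw).1) (frontier_subset_closure hζ) hBζ0
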